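/- arXiv:2103.07697 — 3 statements merged into one kernel-verified Lean document; each statement's English description precedes it below -/
import Mathlib

section
/- (One-dimensional commutator integral identity) With p_m = Σ_{k=0}^m a_k ∂^k and p_m^* = multiplication by Σ_{k=0}^m \overline{a_k} z^k, for every complex polynomial u one has ∫_ℂ ([p_m, p_m^*]u)(z) \overline{u(z)} e^{−|z|²} dλ(z) = Σ_{ℓ=1}^{m} ℓ! ∫_ℂ | Σ_{k=ℓ}^{m} C(k,ℓ) a_k u^{(k−ℓ)}(z) |² e^{−|z|²} dλ(z). In particular this quantity is a nonnegative real number. -/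
/-! For the Gaussian weight, polar coordinates show that the monomials are orthogonal with
`∫ |z^k|² e^{-|z|²} = π k!`, so the weighted pairing of two polynomials is `π ∑ k! P_k conj Q_k`.
For this pairing multiplication by `z` is adjoint to `∂`. Leibniz's rule gives
`∂^k (z^j u) - z^j ∂^k u = ∑_{ℓ ≥ 1} C(k,ℓ) ℓ! C(j,ℓ) z^{j-ℓ} ∂^{k-ℓ} u`; moving `z^{j-ℓ}` to the
other side as `∂^{j-ℓ}` and summing over `k, j` with weights `a_k conj a_j` turns
`⟨[p_m, p_m^*] u, u⟩` into `∑_ℓ ℓ! ⟨v_ℓ, v_ℓ⟩` with `v_ℓ = ∑_k C(k,ℓ) a_k ∂^{k-ℓ} u`. -/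

open Polynomial MeasureTheory

/-- The operator p_m = Σ_{k=0}^m a_k ∂^k acting on polynomials. -/
noncomputable def Pop (a : ℕ → ℂ) (m : ℕ) (u : Polynomial ℂ) : Polynomial ℂ :=
  ∑ k ∈ Finset.range (m + 1), a k • derivative^[k] u

/-- The polynomial Σ_{k=0}^m conj(a_k) z^k, for the multiplication operator p_m^*. -/
noncomputable def Pstar (a : ℕ → ℂ) (m : ℕ) : Polynomial ℂ :=
  ∑ k ∈ Finset.range (m + 1), C ((starRingEnd ℂ) (a k)) * X ^ k

open Set Real
open scoped Nat ComplexConjugate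

lemma integrable_norm_pow_mul_exp_neg_sq (n : ℕ) :
    Integrable fun z : ℂ => ‖z‖ ^ n * exp (-‖z‖ ^ 2) := by
  rw [integrable_fun_norm_addHaar volume (f := fun r => r ^ n * exp (-r ^ 2))]
  refine (integrableOn_rpow_mul_exp_neg_mul_sq one_pos (s := n + 1)
    (by linarith [n.cast_nonneg (α := ℝ)])).congr_fun (fun r hr => ?_) measurableSet_Ioi
  simp only [Real.rpow_add_one hr.ne', rpow_natCast, neg_mul, one_mul,
    Complex.finrank_real_complex, Nat.add_one_sub_one, pow_one, smul_eq_mul]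
  ring

lemma integrable_pow_mul_conj_pow_mul_exp_neg_sq (i j : ℕ) :
    Integrable fun z : ℂ => z ^ i * conj z ^ j * (exp (-‖z‖ ^ 2) : ℂ) := by
  refine (integrable_norm_pow_mul_exp_neg_sq (i + j)).mono' (by fun_prop) (.of_forall fun z => ?_)
  rw [norm_mul, norm_mul, norm_pow, norm_pow, Complex.norm_conj, Complex.norm_real,
    Real.norm_of_nonneg (exp_pos _).le, pow_add]

lemma integral_cexp_int_mul_I_Ioo (n : ℤ) :
    ∫ θ in Ioo (-π) π, Complex.exp (n * θ * Complex.I) = if n = 0 then (2 * π : ℂ) else 0 := by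
  split_ifs with hn
  · simp [hn, two_mul, pi_pos.le]
  · have hc : (n * Complex.I : ℂ) ≠ 0 := mul_ne_zero (Int.cast_ne_zero.mpr hn) Complex.I_ne_zero
    rw [← integral_Ioc_eq_integral_Ioo, ← intervalIntegral.integral_of_le (by linarith [pi_pos])]
    simp_rw [mul_right_comm _ _ Complex.I]
    rw [integral_exp_mul_complex hc, div_eq_zero_iff, sub_eq_zero]
    left
    have hshift : (n * Complex.I * π : ℂ) = n * Complex.I * (-π : ℝ) + n * (2 * π * Complex.I) := by
      push_cast; ring
    rw [hshift, Complex.exp_add, Complex.exp_int_mul_two_pi_mul_I, mul_one]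

lemma integral_Ioi_pow_mul_exp_neg_sq (n : ℕ) :
    ∫ r in Ioi (0 : ℝ), r ^ (2 * n + 1) * exp (-r ^ 2) = n ! / 2 := by
  have h := integral_rpow_mul_exp_neg_rpow (p := 2) (q := 2 * n + 1) two_pos
    (by linarith [n.cast_nonneg (α := ℝ)])
  rw [show ((2 * n + 1 : ℝ) + 1) / 2 = n + 1 by ring, Gamma_nat_eq_factorial] at h
  rw [← setIntegral_congr_fun (f := fun r : ℝ => r ^ (2 * n + 1 : ℝ) * exp (-r ^ (2 : ℝ)))
    measurableSet_Ioi fun r _ => by norm_cast, h]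
  ring

lemma polarCoord_symm_smul_pow_mul_conj_pow_mul_exp_neg_sq (i j : ℕ) {r : ℝ} (hr : 0 < r)
    (θ : ℝ) :
    r • (fun z : ℂ => z ^ i * conj z ^ j * (exp (-‖z‖ ^ 2) : ℂ))
        (Complex.polarCoord.symm (r, θ)) =
      ((r ^ (i + j + 1) * exp (-r ^ 2) : ℝ) : ℂ) *
        Complex.exp (((i - j : ℤ) : ℂ) * θ * Complex.I) := by
  have hz : Complex.polarCoord.symm (r, θ) = r * Complex.exp (θ * Complex.I) := by
    simp [Complex.polarCoord_symm_apply, Complex.exp_mul_I]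
  have hconj : conj (Complex.exp (θ * Complex.I)) = Complex.exp (-(θ * Complex.I)) := by
    rw [← Complex.exp_conj]; simp
  simp only [hz, norm_mul, Complex.norm_real, Complex.norm_exp_ofReal_mul_I,
    Real.norm_of_nonneg hr.le, mul_one, map_mul, Complex.conj_ofReal, hconj, mul_pow,
    ← Complex.exp_nat_mul, Complex.real_smul]
  push_cast
  rw [show ((i : ℂ) - j) * θ * Complex.I = i * (θ * Complex.I) + j * (-(θ * Complex.I)) by ring,
    Complex.exp_add]
  ring

lemma integral_pow_mul_conj_pow_mul_exp_neg_sq (i j : ℕ) :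
    ∫ z : ℂ, z ^ i * conj z ^ j * (exp (-‖z‖ ^ 2) : ℂ) = if i = j then (π * i ! : ℂ) else 0 := by
  rw [← Complex.integral_comp_polarCoord_symm,
    setIntegral_congr_fun polarCoord.open_target.measurableSet fun p hp =>
      polarCoord_symm_smul_pow_mul_conj_pow_mul_exp_neg_sq i j hp.1 p.2,
    polarCoord_target, Measure.volume_eq_prod,
    setIntegral_prod_mul (f := fun r : ℝ => ((r ^ (i + j + 1) * exp (-r ^ 2) : ℝ) : ℂ))
      (g := fun θ : ℝ => Complex.exp (((i - j : ℤ) : ℂ) * θ * Complex.I)),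
    integral_cexp_int_mul_I_Ioo, integral_complex_ofReal]
  simp only [sub_eq_zero, Nat.cast_inj]
  split_ifs with hij
  · subst hij
    rw [← two_mul, integral_Ioi_pow_mul_exp_neg_sq]
    push_cast
    ring
  · rw [mul_zero]

noncomputable def fockPairing : ℂ[X] →ₗ[ℂ] ℂ[X] →ₗ⋆[ℂ] ℂ :=
  LinearMap.mk₂'ₛₗ (RingHom.id ℂ) (starRingEnd ℂ)
    (fun P Q => P.sum fun k c => k ! * c * conj (Q.coeff k))
    (fun P₁ P₂ Q => sum_add_index _ _ _ (fun _ => by simp) (fun _ _ _ => by ring))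
    (fun c P Q => by
      rw [sum_smul_index _ _ _ (fun _ => by simp), sum_def, sum_def, smul_eq_mul, Finset.mul_sum]
      exact Finset.sum_congr rfl fun _ _ => by rw [RingHom.id_apply]; ring)
    (fun P Q₁ Q₂ => by simp only [coeff_add, map_add, mul_add, sum_add])
    (fun c P Q => by
      simp only [coeff_smul, smul_eq_mul, map_mul, sum_def, Finset.mul_sum]
      exact Finset.sum_congr rfl fun _ _ => by ring)

@[simp]
lemma fockPairing_monomial_left (n : ℕ) (a : ℂ) (Q : ℂ[X]) :
    fockPairing (monomial n a) Q = n ! * a * conj (Q.coeff n) :=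
  sum_monomial_index (f := fun k c => k ! * c * conj (Q.coeff k)) _ (by simp)

lemma integrable_eval_mul_conj_eval_mul_exp_neg_sq (P Q : ℂ[X]) :
    Integrable fun z : ℂ => P.eval z * conj (Q.eval z) * (exp (-‖z‖ ^ 2) : ℂ) := by
  induction P using Polynomial.induction_on' with
  | add P₁ P₂ h₁ h₂ =>
    simp only [eval_add, add_mul]
    exact h₁.add h₂
  | monomial n a =>
    induction Q using Polynomial.induction_on' with
    | add Q₁ Q₂ h₁ h₂ =>
      simp only [eval_add, map_add, mul_add, add_mul]
      exact h₁.add h₂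
    | monomial k b =>
      refine ((integrable_pow_mul_conj_pow_mul_exp_neg_sq n k).const_mul (a * conj b)).congr
        (.of_forall fun z => ?_)
      simp only [eval_monomial, map_mul, map_pow]
      ring

lemma integral_eval_mul_conj_eval_mul_exp_neg_sq (P Q : ℂ[X]) :
    ∫ z : ℂ, P.eval z * conj (Q.eval z) * (exp (-‖z‖ ^ 2) : ℂ) = π * fockPairing P Q := by
  induction P using Polynomial.induction_on' with
  | add P₁ P₂ h₁ h₂ =>
    simp only [eval_add, add_mul, map_add, LinearMap.add_apply, mul_add, ← h₁, ← h₂]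
    exact integral_add (integrable_eval_mul_conj_eval_mul_exp_neg_sq _ _)
      (integrable_eval_mul_conj_eval_mul_exp_neg_sq _ _)
  | monomial n a =>
    induction Q using Polynomial.induction_on' with
    | add Q₁ Q₂ h₁ h₂ =>
      simp only [eval_add, map_add, mul_add, add_mul, ← h₁, ← h₂]
      exact integral_add (integrable_eval_mul_conj_eval_mul_exp_neg_sq _ _)
        (integrable_eval_mul_conj_eval_mul_exp_neg_sq _ _)
    | monomial k b =>
      have h : ∀ z : ℂ, (monomial n a).eval z * conj ((monomial k b).eval z) *
          (exp (-‖z‖ ^ 2) : ℂ) = a * conj b * (z ^ n * conj z ^ k * (exp (-‖z‖ ^ 2) : ℂ)) := by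
        intro z
        simp only [eval_monomial, map_mul, map_pow]
        ring
      simp only [h, integral_const_mul, integral_pow_mul_conj_pow_mul_exp_neg_sq,
        fockPairing_monomial_left, coeff_monomial]
      rcases eq_or_ne n k with rfl | hnk
      · simp only [if_true]
        ring
      · simp only [hnk, hnk.symm, if_false, map_zero, mul_zero]

lemma fockPairing_X_mul (P Q : ℂ[X]) : fockPairing (X * P) Q = fockPairing P (derivative Q) := by
  induction P using Polynomial.induction_on' with
  | add P₁ P₂ h₁ h₂ => simp only [mul_add, map_add, LinearMap.add_apply, h₁, h₂]
  | monomial n a =>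
    rw [X_mul_monomial, fockPairing_monomial_left, fockPairing_monomial_left, coeff_derivative,
      Nat.factorial_succ]
    simp only [map_mul, map_add, map_natCast, map_one, Nat.cast_mul, Nat.cast_succ]
    ring

lemma fockPairing_X_pow_mul (n : ℕ) (P Q : ℂ[X]) :
    fockPairing (X ^ n * P) Q = fockPairing P (derivative^[n] Q) := by
  induction n generalizing Q with
  | zero => simp
  | succ n ih => rw [pow_succ', mul_assoc, fockPairing_X_mul, ih, ← Function.iterate_succ_apply]

lemma iterate_derivative_X_pow_mul_sub {R : Type*} [CommRing R] (k j : ℕ) (u : R[X]) :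
    derivative^[k] (X ^ j * u) - X ^ j * derivative^[k] u =
      ∑ ℓ ∈ Finset.Icc 1 k,
        (k.choose ℓ * j.descFactorial ℓ) • (X ^ (j - ℓ) * derivative^[k - ℓ] u) := by
  rw [mul_comm, iterate_derivative_mul, Finset.range_eq_Ico,
    Finset.sum_eq_sum_Ico_succ_bot k.succ_pos, zero_add, Nat.succ_eq_add_one,
    Finset.Ico_add_one_right_eq_Icc]
  simp only [Nat.choose_zero_right, Nat.sub_zero, Function.iterate_zero_apply, one_smul, mul_comm,
    add_sub_cancel_left, iterate_derivative_X_pow_eq_smul, mul_smul, smul_mul_assoc,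
    Nat.cast_smul_eq_nsmul]

lemma fockPairing_iterate_derivative_X_pow_mul_sub {k m : ℕ} (hk : k ≤ m) (j : ℕ) (u : ℂ[X]) :
    fockPairing (derivative^[k] (X ^ j * u) - X ^ j * derivative^[k] u) u =
      ∑ ℓ ∈ Finset.Icc 1 m, ℓ ! *
        (k.choose ℓ * j.choose ℓ * fockPairing (derivative^[k - ℓ] u) (derivative^[j - ℓ] u)) := by
  rw [iterate_derivative_X_pow_mul_sub, map_sum, LinearMap.sum_apply]
  refine Finset.sum_subset (Finset.Icc_subset_Icc_right hk) (fun ℓ hℓm hℓk => ?_) |>.trans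
    (Finset.sum_congr rfl fun ℓ _ => ?_)
  · have hkℓ : k < ℓ := by simp only [Finset.mem_Icc] at hℓm hℓk; omega
    rw [Nat.choose_eq_zero_of_lt hkℓ, zero_mul, zero_smul, map_zero, LinearMap.zero_apply]
  · rw [map_nsmul, LinearMap.smul_apply, fockPairing_X_pow_mul, nsmul_eq_mul,
      Nat.descFactorial_eq_factorial_mul_choose]
    push_cast
    ring

lemma Pop_Pstar_mul_sub_Pstar_mul_Pop (a : ℕ → ℂ) (m : ℕ) (u : ℂ[X]) :
    Pop a m (Pstar a m * u) - Pstar a m * Pop a m u =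
      ∑ k ∈ Finset.range (m + 1), ∑ j ∈ Finset.range (m + 1),
        (a k * conj (a j)) • (derivative^[k] (X ^ j * u) - X ^ j * derivative^[k] u) := by
  simp only [Pop, Pstar, smul_sub, Finset.sum_sub_distrib, Finset.sum_mul, Finset.mul_sum,
    iterate_derivative_sum, ← smul_eq_C_mul, iterate_derivative_smul, Finset.smul_sum, smul_smul,
    mul_smul_comm, smul_mul_assoc]

lemma sum_Icc_choose_mul_smul_eq_sum_range {R M : Type*} [Semiring R] [AddCommMonoid M]
    [Module R M] (ℓ m : ℕ) (c : ℕ → R) (f : ℕ → M) :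
    ∑ k ∈ Finset.Icc ℓ m, (k.choose ℓ * c k) • f k =
      ∑ k ∈ Finset.range (m + 1), (k.choose ℓ * c k) • f k := by
  refine Finset.sum_subset (fun k hk => ?_) fun k hkm hkℓ => ?_
  · simp only [Finset.mem_Icc, Finset.mem_range] at hk ⊢
    omega
  · have hk : k < ℓ := by simp only [Finset.mem_Icc, Finset.mem_range] at hkm hkℓ; omega
    rw [Nat.choose_eq_zero_of_lt hk, Nat.cast_zero, zero_mul, zero_smul]

lemma fockPairing_Pop_Pstar_commutator (a : ℕ → ℂ) (m : ℕ) (u : ℂ[X]) :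
    fockPairing (Pop a m (Pstar a m * u) - Pstar a m * Pop a m u) u =
      ∑ ℓ ∈ Finset.Icc 1 m, ℓ ! *
        fockPairing (∑ k ∈ Finset.range (m + 1), (k.choose ℓ * a k) • derivative^[k - ℓ] u)
          (∑ k ∈ Finset.range (m + 1), (k.choose ℓ * a k) • derivative^[k - ℓ] u) := by
  rw [Pop_Pstar_mul_sub_Pstar_mul_Pop]
  simp only [map_sum, LinearMap.sum_apply, map_smul, LinearMap.smul_apply, map_smulₛₗ, smul_eq_mul]
  rw [Finset.sum_congr rfl fun k hk => Finset.sum_congr rfl fun j _ => by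
    rw [fockPairing_iterate_derivative_X_pow_mul_sub (Finset.mem_range_succ_iff.mp hk)]]
  simp only [Finset.mul_sum]
  conv_lhs => enter [2, k]; rw [Finset.sum_comm]
  conv_lhs => rw [Finset.sum_comm]
  conv_rhs => enter [2, ℓ]; rw [Finset.sum_comm]
  refine Finset.sum_congr rfl fun ℓ _ => Finset.sum_congr rfl fun k _ =>
    Finset.sum_congr rfl fun j _ => ?_
  simp only [map_mul, map_natCast]
  ring

/-- One-dimensional commutator integral identity:
∫ ([p_m,p_m^*]u) conj(u) e^{-|z|²} = Σ_{ℓ=1}^m ℓ! ∫ |Σ_{k=ℓ}^m C(k,ℓ) a_k u^{(k-ℓ)}|² e^{-|z|²}. -/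
theorem stmt8 (m : ℕ) (a : ℕ → ℂ) (u : Polynomial ℂ) :
    (∫ z : ℂ, (Pop a m (Pstar a m * u) - Pstar a m * Pop a m u).eval z *
        (starRingEnd ℂ) (u.eval z) * (Real.exp (-‖z‖ ^ 2) : ℂ)) =
      ∑ ℓ ∈ Finset.Icc 1 m,
        (Nat.factorial ℓ : ℂ) *
          ∫ z : ℂ,
            ((Complex.normSq
              ((∑ k ∈ Finset.Icc ℓ m,
                ((Nat.choose k ℓ : ℂ) * a k) • derivative^[k - ℓ] u).eval z) : ℝ) : ℂ) *
            (Real.exp (-‖z‖ ^ 2) : ℂ) := by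
  have integral_normSq (v : ℂ[X]) :
      ∫ z : ℂ, ((Complex.normSq (v.eval z) : ℝ) : ℂ) * (exp (-‖z‖ ^ 2) : ℂ) =
        π * fockPairing v v := by
    simp_rw [← Complex.mul_conj]
    exact integral_eval_mul_conj_eval_mul_exp_neg_sq v v
  simp_rw [integral_eval_mul_conj_eval_mul_exp_neg_sq, integral_normSq,
    sum_Icc_choose_mul_smul_eq_sum_range, fockPairing_Pop_Pstar_commutator, Finset.mul_sum]
  exact Finset.sum_congr rfl fun ℓ _ => mul_left_comm _ _ _
end

section
/- (Weyl-algebra form of the one-dimensional commutator) Let p(w) = Σ_{k=0}^m a_k w^k be a complex polynomial, P = p(∂) the corresponding constant-coefficient differential operator, and P^* multiplication by \overline{p}(z) := Σ \overline{a_k} z^k. Then for every complex polynomial u, ∫_ℂ ([P, P^*]u) \overline{u} e^{−|z|²} dλ = Σ_{ℓ=1}^{m} (1/ℓ!) ∫_ℂ |p^{(ℓ)}(∂) u|² e^{−|z|²} dλ, where p^{(ℓ)} denotes the ℓ-th derivative of the polynomial p. -/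
open Polynomial MeasureTheory

/-- The constant-coefficient differential operator q(∂) applied to a polynomial. -/
noncomputable def applyA (q u : Polynomial ℂ) : Polynomial ℂ :=
  ∑ k ∈ Finset.range (q.natDegree + 1), q.coeff k • derivative^[k] u

open ComplexConjugate Finset Nat Real

/-!
The Gaussian pairing `∫ f conj(g) e^{-|z|²}` of two polynomials equals `π ∑ₙ n! fₙ conj(gₙ)`:
the monomials are orthogonal, since rotating `z` multiplies `∫ zⁱ conj(z)ʲ e^{-|z|²}` by a phase
`e^{i(i-j)θ}`, and `∫ |z|^{2n} e^{-|z|²} = π n!`. In this coefficient form multiplication by `z`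
is adjoint to `∂`, hence multiplication by `conj p` is adjoint to `p(∂)`. Leibniz' rule gives
`[p(∂), v] = ∑_{ℓ ≥ 1} (1/ℓ!) v^{(ℓ)} p^{(ℓ)}(∂)`, and for `v = conj p` the `ℓ`-th term pairs with
`u` to `(1/ℓ!) ‖p^{(ℓ)}(∂) u‖²`.
-/

lemma applyA_eq_aeval (q u : ℂ[X]) :
    applyA q u = aeval (derivative : Module.End ℂ ℂ[X]) q u := by
  simp [applyA, aeval_eq_sum_range, Module.End.pow_apply]

lemma applyA_eq_sum_range {q : ℂ[X]} {N : ℕ} (h : q.natDegree < N) (u : ℂ[X]) :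
    applyA q u = ∑ k ∈ range N, q.coeff k • derivative^[k] u := by
  simp [applyA_eq_aeval, aeval_eq_sum_range' h, Module.End.pow_apply]

lemma applyA_smul_left (c : ℂ) (q u : ℂ[X]) : applyA (c • q) u = c • applyA q u := by
  simp only [applyA_eq_aeval, map_smul, LinearMap.smul_apply]

lemma applyA_hasseDeriv (ℓ : ℕ) (p u : ℂ[X]) :
    applyA (hasseDeriv ℓ p) u = (ℓ ! : ℂ)⁻¹ • applyA (derivative^[ℓ] p) u := by
  have hfac : (ℓ ! : ℂ) ≠ 0 := by exact_mod_cast ℓ.factorial_ne_zero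
  rw [← factorial_smul_hasseDeriv, LinearMap.smul_apply, ← Nat.cast_smul_eq_nsmul ℂ,
    applyA_smul_left, inv_smul_smul₀ hfac]

lemma applyA_mul_eq_sum_hasseDeriv (p v u : ℂ[X]) :
    applyA p (v * u) =
      ∑ ℓ ∈ range (p.natDegree + 1), derivative^[ℓ] v * applyA (hasseDeriv ℓ p) u := by
  set N := p.natDegree + 1
  calc applyA p (v * u)
      = ∑ k ∈ range N, ∑ ℓ ∈ range (k + 1),
          (p.coeff (ℓ + (k - ℓ)) * (ℓ + (k - ℓ)).choose ℓ) •
            (derivative^[ℓ] v * derivative^[k - ℓ] u) := by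
        refine sum_congr rfl fun k _ => ?_
        rw [mul_comm v u, iterate_derivative_mul, smul_sum]
        refine sum_congr rfl fun ℓ hℓ => ?_
        rw [Nat.add_sub_cancel' (Nat.lt_succ_iff.mp (mem_range.mp hℓ)), mul_comm,
          ← Nat.cast_smul_eq_nsmul ℂ, smul_smul]
    _ = ∑ ℓ ∈ range N, ∑ i ∈ range (N - ℓ),
          (p.coeff (ℓ + i) * (ℓ + i).choose ℓ) • (derivative^[ℓ] v * derivative^[i] u) :=
        sum_range_diag_flip N fun ℓ i =>
          (p.coeff (ℓ + i) * (ℓ + i).choose ℓ) • (derivative^[ℓ] v * derivative^[i] u)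
    _ = _ := by
        refine sum_congr rfl fun ℓ hℓ => ?_
        have hdeg : (hasseDeriv ℓ p).natDegree < N - ℓ := by
          rw [natDegree_hasseDeriv]; have := mem_range.mp hℓ; omega
        rw [applyA_eq_sum_range hdeg, mul_sum]
        refine sum_congr rfl fun i _ => ?_
        rw [hasseDeriv_coeff, mul_smul_comm, add_comm i ℓ, mul_comm (p.coeff _)]

lemma applyA_mul_sub_mul_applyA (p v u : ℂ[X]) :
    applyA p (v * u) - v * applyA p u =
      ∑ ℓ ∈ Icc 1 p.natDegree, derivative^[ℓ] v * applyA (hasseDeriv ℓ p) u := by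
  rw [applyA_mul_eq_sum_hasseDeriv, range_eq_Ico, sum_eq_sum_Ico_succ_bot (by omega)]
  simp only [Function.iterate_zero, id_eq, hasseDeriv_zero, LinearMap.id_coe,
    add_sub_cancel_left, Ico_add_one_right_eq_Icc]

-- `∑ₙ n! fₙ conj(gₙ)`, written with `lsum` to make it visibly linear in `f`.
noncomputable def fockForm (f g : ℂ[X]) : ℂ :=
  lsum (fun n => LinearMap.mulRight ℂ (conj (g.coeff n) * n !)) f

lemma fockForm_eq_sum_range {f : ℂ[X]} {N : ℕ} (h : f.natDegree < N) (g : ℂ[X]) :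
    fockForm f g = ∑ n ∈ range N, f.coeff n * (conj (g.coeff n) * n !) := by
  rw [fockForm, lsum_apply, sum_over_range' _ (fun n => map_zero _) N h]
  simp only [LinearMap.mulRight_apply]

lemma fockForm_smul_left (c : ℂ) (f g : ℂ[X]) : fockForm (c • f) g = c * fockForm f g :=
  map_smul (lsum _) c f

lemma fockForm_sum_left {ι : Type*} (s : Finset ι) (F : ι → ℂ[X]) (g : ℂ[X]) :
    fockForm (∑ i ∈ s, F i) g = ∑ i ∈ s, fockForm (F i) g :=
  map_sum (lsum _) F s

lemma conj_fockForm (f g : ℂ[X]) : conj (fockForm f g) = fockForm g f := by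
  have hf : f.natDegree < max f.natDegree g.natDegree + 1 := by omega
  have hg : g.natDegree < max f.natDegree g.natDegree + 1 := by omega
  rw [fockForm_eq_sum_range hf, fockForm_eq_sum_range hg, map_sum]
  refine sum_congr rfl fun n _ => ?_
  simp only [map_mul, Complex.conj_conj, map_natCast]
  ring

lemma fockForm_sum_smul_right {ι : Type*} (f : ℂ[X]) (s : Finset ι) (c : ι → ℂ)
    (G : ι → ℂ[X]) : fockForm f (∑ i ∈ s, c i • G i) = ∑ i ∈ s, conj (c i) * fockForm f (G i) := by
  simp only [← conj_fockForm _ f, fockForm_sum_left, fockForm_smul_left, map_sum, map_mul]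

lemma fockForm_X_mul (f g : ℂ[X]) : fockForm (X * f) g = fockForm f (derivative g) := by
  have hXf : (X * f).natDegree < f.natDegree + 2 :=
    natDegree_mul_le.trans_lt (by rw [natDegree_X]; omega)
  rw [fockForm_eq_sum_range hXf, fockForm_eq_sum_range (lt_add_one _), sum_range_succ',
    coeff_X_mul_zero, zero_mul, add_zero]
  refine sum_congr rfl fun n _ => ?_
  simp only [coeff_X_mul, coeff_derivative, map_mul, map_add, map_natCast, map_one,
    factorial_succ]
  push_cast
  ring

lemma fockForm_X_pow_mul (k : ℕ) (f g : ℂ[X]) :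
    fockForm (X ^ k * f) g = fockForm f (derivative^[k] g) := by
  induction k generalizing g with
  | zero => simp
  | succ k ih => rw [_root_.pow_succ', mul_assoc, fockForm_X_mul, ih, Function.iterate_succ_apply]

lemma fockForm_map_conj_mul (v f g : ℂ[X]) :
    fockForm (v.map (starRingEnd ℂ) * f) g = fockForm f (applyA v g) := by
  conv_lhs => rw [(v.map _).as_sum_range_C_mul_X_pow]
  simp only [applyA, natDegree_map, coeff_map, fockForm_sum_smul_right, sum_mul,
    fockForm_sum_left, ← smul_eq_C_mul, smul_mul_assoc, fockForm_smul_left, fockForm_X_pow_mul]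

lemma integral_comp_circle_mul {E : Type*} [NormedAddCommGroup E] [NormedSpace ℝ E] (a : Circle)
    (F : ℂ → E) : ∫ z, F (a * z) = ∫ z, F z :=
  (rotation a).measurePreserving.integral_comp (rotation a).toHomeomorph.measurableEmbedding F

lemma integral_norm_pow_mul_gaussian (n : ℕ) :
    ∫ z : ℂ, ‖z‖ ^ n * rexp (-‖z‖ ^ 2) = π * Gamma (n / 2 + 1) := by
  have h := Complex.integral_rpow_mul_exp_neg_rpow (p := 2) (q := n) one_le_two
    (by linarith [n.cast_nonneg (α := ℝ)])
  simp only [rpow_natCast, rpow_two] at h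
  rw [h]
  ring_nf

lemma integrable_norm_pow_mul_gaussian (n : ℕ) :
    Integrable fun z : ℂ => ‖z‖ ^ n * rexp (-‖z‖ ^ 2) :=
  .of_integral_ne_zero (by rw [integral_norm_pow_mul_gaussian]; positivity)

lemma integrable_pow_mul_conj_pow_gaussian (i j : ℕ) :
    Integrable fun z : ℂ => z ^ i * conj z ^ j * (rexp (-‖z‖ ^ 2) : ℂ) := by
  refine (integrable_norm_pow_mul_gaussian (i + j)).mono' (by fun_prop) (.of_forall fun z => ?_)
  rw [norm_mul, norm_mul, norm_pow, norm_pow, Complex.norm_conj, Complex.norm_real,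
    norm_of_nonneg (exp_pos _).le, pow_add]

lemma integral_pow_mul_conj_pow_gaussian_of_ne {i j : ℕ} (hij : i ≠ j) :
    ∫ z : ℂ, z ^ i * conj z ^ j * (rexp (-‖z‖ ^ 2) : ℂ) = 0 := by
  set a := Circle.exp (π / ((i : ℝ) - j))
  have hsub : (i : ℂ) - j ≠ 0 := sub_ne_zero.mpr (by exact_mod_cast hij)
  have ha : (a : ℂ) ^ i * conj (a : ℂ) ^ j = -1 := by
    rw [Circle.coe_exp, ← Complex.exp_conj, ← Complex.exp_nat_mul, ← Complex.exp_nat_mul,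
      ← Complex.exp_add, ← Complex.exp_pi_mul_I]
    congr 1
    simp only [map_mul, Complex.conj_ofReal, Complex.conj_I]
    push_cast
    field_simp
    ring
  set F := fun z : ℂ => z ^ i * conj z ^ j * (rexp (-‖z‖ ^ 2) : ℂ)
  have rotate : ∫ z, F (a * z) = ((a : ℂ) ^ i * conj (a : ℂ) ^ j) * ∫ z, F z := by
    rw [← integral_const_mul]
    congr 1 with z
    simp only [F, map_mul, mul_pow, norm_mul, Circle.norm_coe, one_mul]
    ring
  rw [integral_comp_circle_mul, ha] at rotate
  linear_combination rotate / 2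

lemma integral_pow_mul_conj_pow_gaussian (i j : ℕ) :
    ∫ z : ℂ, z ^ i * conj z ^ j * (rexp (-‖z‖ ^ 2) : ℂ) = if i = j then (π : ℂ) * i ! else 0 := by
  split_ifs with hij
  · subst hij
    have h : ∀ z : ℂ, z ^ i * conj z ^ i * (rexp (-‖z‖ ^ 2) : ℂ) =
        ((‖z‖ ^ (2 * i) * rexp (-‖z‖ ^ 2) : ℝ) : ℂ) := fun z => by
      rw [← mul_pow, Complex.mul_conj', pow_mul]; push_cast; ring
    simp_rw [h]
    rw [integral_complex_ofReal, integral_norm_pow_mul_gaussian,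
      show ((2 * i : ℕ) : ℝ) / 2 = i by push_cast; ring, Gamma_nat_eq_factorial]
    norm_cast
  · exact integral_pow_mul_conj_pow_gaussian_of_ne hij

lemma integral_eval_mul_conj_eval_mul_gaussian (f g : ℂ[X]) :
    ∫ z : ℂ, f.eval z * conj (g.eval z) * (rexp (-‖z‖ ^ 2) : ℂ) = π * fockForm f g := by
  set N := max f.natDegree g.natDegree + 1
  have hf : f.natDegree < N := by omega
  have hg : g.natDegree < N := by omega
  have expand : ∀ z : ℂ, f.eval z * conj (g.eval z) * (rexp (-‖z‖ ^ 2) : ℂ) =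
      ∑ i ∈ range N, ∑ j ∈ range N,
        f.coeff i * conj (g.coeff j) * (z ^ i * conj z ^ j * (rexp (-‖z‖ ^ 2) : ℂ)) := by
    intro z
    rw [eval_eq_sum_range' hf, eval_eq_sum_range' hg, map_sum, sum_mul_sum, sum_mul]
    simp only [sum_mul, map_mul, map_pow]
    exact sum_congr rfl fun i _ => sum_congr rfl fun j _ => by ring
  simp_rw [expand]
  rw [integral_finsetSum _ fun i _ => integrable_finsetSum _ fun j _ =>
    (integrable_pow_mul_conj_pow_gaussian i j).const_mul _]
  rw [fockForm_eq_sum_range hf, mul_sum]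
  refine sum_congr rfl fun i hi => ?_
  rw [integral_finsetSum _ fun j _ => (integrable_pow_mul_conj_pow_gaussian i j).const_mul _]
  simp_rw [integral_const_mul, integral_pow_mul_conj_pow_gaussian, mul_ite, mul_zero, sum_ite_eq,
    if_pos hi]
  ring

/-- Weyl-algebra form of the one-dimensional commutator:
∫ ([P,P^*]u) conj(u) e^{-|z|²} = Σ_{ℓ=1}^m (1/ℓ!) ∫ |p^{(ℓ)}(∂)u|² e^{-|z|²},
where P = p(∂) and P^* is multiplication by the conjugate-coefficient polynomial. -/
theorem stmt11 (p u : Polynomial ℂ) :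
    (∫ z : ℂ,
        (applyA p (p.map (starRingEnd ℂ) * u) -
          p.map (starRingEnd ℂ) * applyA p u).eval z *
        (starRingEnd ℂ) (u.eval z) * (Real.exp (-‖z‖ ^ 2) : ℂ)) =
      ∑ ℓ ∈ Finset.Icc 1 p.natDegree,
        (1 / (Nat.factorial ℓ : ℂ)) *
          ∫ z : ℂ, ((Complex.normSq ((applyA (derivative^[ℓ] p) u).eval z) : ℝ) : ℂ) *
            (Real.exp (-‖z‖ ^ 2) : ℂ) := by
  have weighted_norm (w : ℂ[X]) :
      ∫ z : ℂ, ((Complex.normSq (w.eval z) : ℝ) : ℂ) * (rexp (-‖z‖ ^ 2) : ℂ) =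
        π * fockForm w w := by
    simp_rw [← integral_eval_mul_conj_eval_mul_gaussian, Complex.mul_conj]
  simp_rw [weighted_norm]
  rw [integral_eval_mul_conj_eval_mul_gaussian, applyA_mul_sub_mul_applyA, fockForm_sum_left,
    mul_sum]
  refine sum_congr rfl fun ℓ _ => ?_
  rw [iterate_derivative_map, fockForm_map_conj_mul, applyA_hasseDeriv, fockForm_smul_left]
  ring
end

section
/- (Basic estimate implies commutator inequality, polynomial version) In ℂⁿ, with p_1,…,p_n constant-coefficient polynomial differential operators and p_j^* the conjugate-coefficient multiplication operators, suppose there exists C > 0 such that ‖u‖² ≤ C · Σ_{j,k=1}^n ([p_k, p_j^*] u_j, u_k) for every (1,0)-form u = Σ u_j dz_j with polynomial components, where (·,·) is the L²(ℂⁿ, e^{−|z|²}dλ) inner product and ‖u‖² = Σ_j ‖u_j‖². Then ‖u‖² ≤ C (‖Du‖² + ‖D*u‖²) for every such polynomial form u, where ‖Du‖² = Σ_{j<k}‖p_j(u_k) − p_k(u_j)‖² and ‖D*u‖² = ‖Σ_j p_j^* u_j‖². -/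
/-!
The Gaussian pairing `(f, g) = ∫ f ḡ e^{-|z|²}` makes the monomials orthogonal, with
`‖z^α‖² = π^n α!`. Hence `∂_i` is adjoint to multiplication by `z_i`, and `q(∂)` is adjoint to
multiplication by `q̄`. Expanding the squares with these adjunctions gives
`‖Du‖² + ‖D*u‖² = Σ_{j,k} ‖p_k u_j‖² + Σ_{j,k} ([p_k, p_j^*] u_j, u_k)`,
and the first sum on the right is nonnegative.
-/

open MeasureTheory MvPolynomial

/-- The iterated partial derivative ∂^d of a polynomial in n variables. -/
noncomputable def iterD {n : ℕ} (d : Fin n →₀ ℕ) (u : MvPolynomial (Fin n) ℂ) :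
    MvPolynomial (Fin n) ℂ :=
  (List.finRange n).foldr (fun i v => (pderiv i)^[d i] v) u

/-- The constant-coefficient polynomial differential operator q(∂) applied to u. -/
noncomputable def applyDn {n : ℕ} (q u : MvPolynomial (Fin n) ℂ) :
    MvPolynomial (Fin n) ℂ :=
  ∑ d ∈ q.support, q.coeff d • iterD d u

/-- The polynomial with complex-conjugated coefficients. -/
noncomputable def conjn {n : ℕ} (q : MvPolynomial (Fin n) ℂ) : MvPolynomial (Fin n) ℂ :=
  MvPolynomial.map (starRingEnd ℂ) q

/-- Weighted L² square norm ∫ |v|² e^{-|z|²} dλ, as a real number. -/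
noncomputable def Nr {n : ℕ} (v : MvPolynomial (Fin n) ℂ) : ℝ :=
  ∫ z : Fin n → ℂ, Complex.normSq (eval z v) * Real.exp (-∑ i, ‖z i‖ ^ 2)

open Real Set ComplexConjugate
open scoped Nat

lemma integrable_exp_neg_sq_norm_div_two : Integrable (fun z : ℂ => rexp (-‖z‖ ^ 2 / 2)) := by
  simpa [Complex.norm_exp, ← Complex.ofReal_pow, div_eq_inv_mul] using
    (GaussianFourier.integrable_cexp_neg_mul_sq_norm_add (V := ℂ) (b := 1 / 2) (by norm_num)
      0 0).norm

lemma integrable_gaussian_monomial (a b : ℕ) :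
    Integrable (fun z : ℂ => z ^ a * conj z ^ b * (rexp (-‖z‖ ^ 2) : ℂ)) := by
  refine (integrable_exp_neg_sq_norm_div_two.const_mul ((a + b)! * rexp (1 / 2))).mono'
    (by fun_prop) (.of_forall fun z => ?_)
  have hpow : ‖z‖ ^ (a + b) ≤ (a + b)! * rexp (1 / 2 + ‖z‖ ^ 2 / 2) := by
    have h := pow_div_factorial_le_exp (x := ‖z‖) (norm_nonneg z) (a + b)
    rw [div_le_iff₀' (by positivity)] at h
    refine h.trans (mul_le_mul_of_nonneg_left (exp_le_exp.mpr ?_) (by positivity))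
    nlinarith [sq_nonneg (‖z‖ - 1)]
  calc ‖z ^ a * conj z ^ b * (rexp (-‖z‖ ^ 2) : ℂ)‖
        = ‖z‖ ^ (a + b) * rexp (-‖z‖ ^ 2) := by
        rw [norm_mul, norm_mul, norm_pow, norm_pow, RCLike.norm_conj, Complex.norm_real,
          norm_of_nonneg (exp_pos _).le, pow_add]
    _ ≤ (a + b)! * rexp (1 / 2 + ‖z‖ ^ 2 / 2) * rexp (-‖z‖ ^ 2) := by gcongr
    _ = (a + b)! * rexp (1 / 2) * rexp (-‖z‖ ^ 2 / 2) := by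
        rw [mul_assoc, mul_assoc, ← exp_add, ← exp_add]; ring_nf

lemma integral_exp_int_mul_I {k : ℤ} (hk : k ≠ 0) :
    ∫ θ in Ioo (-π) π, Complex.exp (k * θ * Complex.I) = 0 := by
  have hc : (k : ℂ) * Complex.I ≠ 0 := mul_ne_zero (by exact_mod_cast hk) Complex.I_ne_zero
  rw [← integral_Ioc_eq_integral_Ioo, ← intervalIntegral.integral_of_le (by linarith [pi_pos])]
  simp_rw [mul_right_comm _ _ Complex.I]
  rw [integral_exp_mul_complex hc, div_eq_zero_iff, sub_eq_zero]
  left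
  -- e^{ikπ} = e^{-ikπ} e^{2πik}
  rw [show (k : ℂ) * Complex.I * (π : ℝ) =
      k * Complex.I * ((-π : ℝ) : ℂ) + k * (2 * π * Complex.I) by push_cast; ring,
    Complex.exp_add, Complex.exp_int_mul_two_pi_mul_I, mul_one]

lemma integral_pow_mul_exp_neg_sq (a : ℕ) :
    ∫ r in Ioi (0 : ℝ), r ^ (2 * a + 1) * rexp (-r ^ 2) = a ! / 2 := by
  have h := integral_rpow_mul_exp_neg_rpow (p := 2) (q := 2 * a + 1) (by norm_num)
    (by linarith [a.cast_nonneg (α := ℝ)])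
  norm_cast at h
  rw [h, show ((2 * a + 1 + 1 : ℕ) : ℝ) / 2 = a + 1 by push_cast; ring, Gamma_nat_eq_factorial]
  ring

noncomputable def gaussianMoment (a b : ℕ) : ℂ :=
  ∫ z : ℂ, z ^ a * conj z ^ b * (rexp (-‖z‖ ^ 2) : ℂ)

lemma gaussianMoment_integrand_polarCoord_symm (a b : ℕ) (p : ℝ × ℝ) :
    p.1 • (Complex.polarCoord.symm p ^ a * conj (Complex.polarCoord.symm p) ^ b *
      (rexp (-‖Complex.polarCoord.symm p‖ ^ 2) : ℂ)) =
    ((p.1 ^ (a + b + 1) * rexp (-p.1 ^ 2) : ℝ) : ℂ) *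
      Complex.exp (((a - b : ℤ) : ℂ) * p.2 * Complex.I) := by
  have hz : Complex.polarCoord.symm p = p.1 * Complex.exp (p.2 * Complex.I) := by
    rw [Complex.polarCoord_symm_apply, Complex.exp_mul_I]; push_cast; ring
  rw [Complex.norm_polarCoord_symm, sq_abs, hz, map_mul, Complex.conj_ofReal, ← Complex.exp_conj,
    map_mul, Complex.conj_ofReal, Complex.conj_I, mul_pow, mul_pow, ← Complex.exp_nat_mul,
    ← Complex.exp_nat_mul, Complex.real_smul]
  have hexp : Complex.exp (a * (p.2 * Complex.I)) * Complex.exp (b * (p.2 * -Complex.I)) =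
      Complex.exp (((a - b : ℤ) : ℂ) * p.2 * Complex.I) := by
    rw [← Complex.exp_add]; push_cast; ring_nf
  rw [← hexp]; push_cast; ring

lemma gaussianMoment_eq (a b : ℕ) :
    gaussianMoment a b = if a = b then ((π * a ! : ℝ) : ℂ) else 0 := by
  rw [gaussianMoment, ← Complex.integral_comp_polarCoord_symm, polarCoord_target]
  simp_rw [gaussianMoment_integrand_polarCoord_symm]
  rw [Measure.volume_eq_prod,
    setIntegral_prod_mul (fun r : ℝ => ((r ^ (a + b + 1) * rexp (-r ^ 2) : ℝ) : ℂ))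
      (fun θ : ℝ => Complex.exp (((a - b : ℤ) : ℂ) * θ * Complex.I)), integral_complex_ofReal]
  split_ifs with hab
  · subst hab
    simp only [sub_self, Int.cast_zero, zero_mul, Complex.exp_zero, setIntegral_const,
      ← two_mul, integral_pow_mul_exp_neg_sq, Measure.real, Real.volume_Ioo, Complex.real_smul]
    rw [ENNReal.toReal_ofReal (by linarith [pi_pos])]
    push_cast; ring
  · rw [integral_exp_int_mul_I (sub_ne_zero.mpr (by exact_mod_cast hab)), mul_zero]

/-- `(∂ z^a, z^b) = (z^a, z^{b+1})` in one variable; at `a = 0` the truncated `a - 1` is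
harmless because the factor `a` vanishes. -/
lemma natCast_mul_gaussianMoment_pred (a b : ℕ) :
    a * gaussianMoment (a - 1) b = gaussianMoment a (b + 1) := by
  rcases a with _ | a
  · simp [gaussianMoment_eq]
  · simp only [gaussianMoment_eq, add_tsub_cancel_right, add_left_inj]
    split_ifs
    · push_cast [Nat.factorial_succ]; ring
    · simp

lemma sum_sum_ite_lt_add_swap {ι : Type*} [Fintype ι] [LinearOrder ι] (g : ι → ι → ℝ)
    (hg : ∀ i, g i i = 0) :
    ∑ j, ∑ k, (if j < k then g j k + g k j else 0) = ∑ j, ∑ k, g j k := by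
  have hsplit : ∀ j k, g j k = (if j < k then g j k else 0) + (if k < j then g j k else 0) := by
    intro j k
    rcases lt_trichotomy j k with h | rfl | h
    · simp [h, h.not_gt]
    · simp [hg]
    · simp [h, h.not_gt]
  simp_rw [ite_add_zero, Finset.sum_add_distrib]
  rw [Finset.sum_comm (f := fun j k => if j < k then g k j else 0), ← Finset.sum_add_distrib]
  refine Finset.sum_congr rfl fun j _ => ?_
  rw [← Finset.sum_add_distrib]
  exact Finset.sum_congr rfl fun k _ => (hsplit j k).symm

lemma sum_sum_ite_lt_re_sub_swap {M ι : Type*} [AddCommGroup M] [Module ℂ M] [Fintype ι]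
    [LinearOrder ι] (B : M →ₗ[ℂ] M →ₗ⋆[ℂ] ℂ) (w : ι → ι → M) :
    ∑ j, ∑ k, (if j < k then (B (w k j - w j k) (w k j - w j k)).re else 0) =
      ∑ j, ∑ k, ((B (w j k) (w j k)).re - (B (w j k) (w k j)).re) := by
  rw [← sum_sum_ite_lt_add_swap (fun j k => (B (w j k) (w j k)).re - (B (w j k) (w k j)).re)
    fun i => sub_self _]
  refine Finset.sum_congr rfl fun j _ => Finset.sum_congr rfl fun k _ => ?_
  split_ifs
  · simp only [map_sub, LinearMap.sub_apply, Complex.sub_re]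
    ring
  · rfl

section GaussianForm

variable {n : ℕ}

lemma eval_monomial_mul_conj_mul_weight (α β : Fin n →₀ ℕ) (c c' : ℂ) (z : Fin n → ℂ) :
    eval z (monomial α c) * conj (eval z (monomial β c')) * (rexp (-∑ i, ‖z i‖ ^ 2) : ℂ) =
      c * conj c' * ∏ i, (z i ^ α i * conj (z i) ^ β i * (rexp (-‖z i‖ ^ 2) : ℂ)) := by
  simp only [eval_monomial, Finsupp.prod_pow, map_mul, map_prod, map_pow, ← Finset.sum_neg_distrib,
    exp_sum, Complex.ofReal_prod, Finset.prod_mul_distrib]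
  ring

lemma integrable_gaussian_pairing (f g : MvPolynomial (Fin n) ℂ) :
    Integrable fun z : Fin n → ℂ => eval z f * conj (eval z g) * (rexp (-∑ i, ‖z i‖ ^ 2) : ℂ) := by
  induction f using MvPolynomial.induction_on' with
  | add f f' hf hf' =>
    simp only [map_add, add_mul]
    exact hf.add hf'
  | monomial α c =>
    induction g using MvPolynomial.induction_on' with
    | add g g' hg hg' =>
      simp only [map_add, mul_add, add_mul]
      exact hg.add hg'
    | monomial β c' =>
      simp_rw [eval_monomial_mul_conj_mul_weight]
      exact (Integrable.fintype_prod (f := fun i (w : ℂ) =>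
        w ^ α i * conj w ^ β i * (rexp (-‖w‖ ^ 2) : ℂ))
        fun i => integrable_gaussian_monomial (α i) (β i)).const_mul _

noncomputable def gaussianForm : MvPolynomial (Fin n) ℂ →ₗ[ℂ] MvPolynomial (Fin n) ℂ →ₗ⋆[ℂ] ℂ :=
  LinearMap.mk₂'ₛₗ (RingHom.id ℂ) (starRingEnd ℂ)
    (fun f g => ∫ z, eval z f * conj (eval z g) * (rexp (-∑ i, ‖z i‖ ^ 2) : ℂ))
    (fun f f' g => by
      simp only [map_add, add_mul]
      exact integral_add (integrable_gaussian_pairing f g) (integrable_gaussian_pairing f' g))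
    (fun c f g => by
      simp only [smul_eval, smul_eq_mul, mul_assoc, integral_const_mul, RingHom.id_apply])
    (fun f g g' => by
      simp only [map_add, mul_add, add_mul]
      exact integral_add (integrable_gaussian_pairing f g) (integrable_gaussian_pairing f g'))
    (fun c f g => by
      simp only [smul_eval, smul_eq_mul, map_mul, ← integral_const_mul]
      congr 1; ext z; ring)

lemma gaussianForm_apply (f g : MvPolynomial (Fin n) ℂ) :
    gaussianForm f g = ∫ z, eval z f * conj (eval z g) * (rexp (-∑ i, ‖z i‖ ^ 2) : ℂ) := rfl

lemma conj_gaussianForm (f g : MvPolynomial (Fin n) ℂ) :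
    conj (gaussianForm f g) = gaussianForm g f := by
  rw [gaussianForm_apply, gaussianForm_apply, ← integral_conj]
  congr 1; ext z
  rw [map_mul, map_mul, Complex.conj_conj, Complex.conj_ofReal]; ring

lemma re_gaussianForm_self (v : MvPolynomial (Fin n) ℂ) : (gaussianForm v v).re = Nr v := by
  simp_rw [gaussianForm_apply, Complex.mul_conj, ← Complex.ofReal_mul, integral_complex_ofReal,
    Complex.ofReal_re, Nr]

lemma Nr_nonneg (v : MvPolynomial (Fin n) ℂ) : 0 ≤ Nr v :=
  integral_nonneg fun _ => mul_nonneg (Complex.normSq_nonneg _) (exp_pos _).le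

lemma gaussianForm_monomial (α β : Fin n →₀ ℕ) (c c' : ℂ) :
    gaussianForm (monomial α c) (monomial β c') =
      c * conj c' * ∏ i, gaussianMoment (α i) (β i) := by
  simp_rw [gaussianForm_apply, eval_monomial_mul_conj_mul_weight, integral_const_mul]
  rw [integral_fintype_prod_volume_eq_prod (f := fun i (w : ℂ) =>
    w ^ α i * conj w ^ β i * (rexp (-‖w‖ ^ 2) : ℂ))]
  rfl

lemma gaussianForm_pderiv_monomial (i : Fin n) (α β : Fin n →₀ ℕ) (c c' : ℂ) :
    gaussianForm (pderiv i (monomial α c)) (monomial β c') =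
      gaussianForm (monomial α c) (X i * monomial β c') := by
  have hX : X i * monomial β c' = monomial (β + Finsupp.single i 1) c' := by
    rw [X, monomial_mul, one_mul, add_comm]
  have hfactor : ∀ j, (if j = i then (α i : ℂ) else 1) *
      gaussianMoment ((α - Finsupp.single i 1 : Fin n →₀ ℕ) j) (β j) =
      gaussianMoment (α j) ((β + Finsupp.single i 1 : Fin n →₀ ℕ) j) := by
    intro j
    by_cases hj : j = i
    · subst hj
      simp [natCast_mul_gaussianMoment_pred]
    · simp [hj, Finsupp.single_eq_of_ne hj]
  rw [pderiv_monomial, hX, gaussianForm_monomial, gaussianForm_monomial, ← Finset.prod_congr rfl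
    fun j _ => hfactor j, Finset.prod_mul_distrib, Finset.prod_ite_eq' Finset.univ i]
  simp only [Finset.mem_univ, if_true]
  ring

lemma gaussianForm_pderiv (i : Fin n) (f g : MvPolynomial (Fin n) ℂ) :
    gaussianForm (pderiv i f) g = gaussianForm f (X i * g) := by
  induction f using MvPolynomial.induction_on' generalizing g with
  | add f f' hf hf' => simp only [map_add, LinearMap.add_apply, hf, hf']
  | monomial α c =>
    induction g using MvPolynomial.induction_on' with
    | add g g' hg hg' => simp only [map_add, mul_add, hg, hg']
    | monomial β c' => exact gaussianForm_pderiv_monomial i α β c c'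

lemma gaussianForm_iterate_pderiv (i : Fin n) (m : ℕ) (f g : MvPolynomial (Fin n) ℂ) :
    gaussianForm ((pderiv i)^[m] f) g = gaussianForm f (X i ^ m * g) := by
  induction m generalizing f with
  | zero => simp
  | succ m ih => rw [Function.iterate_succ_apply, ih, gaussianForm_pderiv, pow_succ', mul_assoc]

lemma gaussianForm_iterD (d : Fin n →₀ ℕ) (f g : MvPolynomial (Fin n) ℂ) :
    gaussianForm (iterD d f) g = gaussianForm f (monomial d 1 * g) := by
  have hfold : ∀ (l : List (Fin n)) (g : MvPolynomial (Fin n) ℂ),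
      gaussianForm (l.foldr (fun i v => (pderiv i)^[d i] v) f) g =
        gaussianForm f ((l.map fun i => X i ^ d i).prod * g) := by
    intro l
    induction l with
    | nil => simp
    | cons i l ih =>
      intro g
      rw [List.foldr_cons, gaussianForm_iterate_pderiv, ih, List.map_cons, List.prod_cons,
        mul_left_comm, mul_assoc]
  rw [iterD, hfold, ← Fin.prod_univ_def, monomial_eq, C_1, one_mul, Finsupp.prod_pow]

lemma gaussianForm_applyDn (q f g : MvPolynomial (Fin n) ℂ) :
    gaussianForm (applyDn q f) g = gaussianForm f (conjn q * g) := by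
  conv_rhs => rw [conjn, q.as_sum, map_sum]
  simp only [applyDn, map_sum, LinearMap.sum_apply, Finset.sum_mul, map_smul, LinearMap.smul_apply,
    smul_eq_mul, gaussianForm_iterD, map_monomial]
  refine Finset.sum_congr rfl fun d _ => ?_
  rw [show monomial d (conj (q.coeff d)) = conj (q.coeff d) • monomial d 1 by
    rw [smul_monomial, smul_eq_mul, mul_one], smul_mul_assoc, LinearMap.map_smulₛₗ,
    Complex.conj_conj, smul_eq_mul]

lemma gaussianForm_conjn_mul (q f g : MvPolynomial (Fin n) ℂ) :
    gaussianForm (conjn q * f) g = gaussianForm f (applyDn q g) := by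
  rw [← conj_gaussianForm, ← gaussianForm_applyDn, conj_gaussianForm]

noncomputable def normSqD (p u : Fin n → MvPolynomial (Fin n) ℂ) : ℝ :=
  ∑ j, ∑ k, if j < k then Nr (applyDn (p j) (u k) - applyDn (p k) (u j)) else 0

noncomputable def normSqDstar (p u : Fin n → MvPolynomial (Fin n) ℂ) : ℝ :=
  Nr (∑ j, conjn (p j) * u j)

noncomputable def commutatorSum (p u : Fin n → MvPolynomial (Fin n) ℂ) : ℝ :=
  (∑ j, ∑ k,
    gaussianForm (applyDn (p k) (conjn (p j) * u j) - conjn (p j) * applyDn (p k) (u j)) (u k)).re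

theorem normSqD_add_normSqDstar (p u : Fin n → MvPolynomial (Fin n) ℂ) :
    normSqD p u + normSqDstar p u = ∑ j, ∑ k, Nr (applyDn (p k) (u j)) + commutatorSum p u := by
  have hD : normSqD p u = ∑ j, ∑ k, (Nr (applyDn (p k) (u j)) -
      (gaussianForm (applyDn (p k) (u j)) (applyDn (p j) (u k))).re) := by
    simp only [normSqD, ← re_gaussianForm_self]
    exact sum_sum_ite_lt_re_sub_swap gaussianForm fun j k => applyDn (p k) (u j)
  have hDstar : normSqDstar p u =
      ∑ j, ∑ k, (gaussianForm (conjn (p j) * u j) (conjn (p k) * u k)).re := by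
    simp only [normSqDstar, ← re_gaussianForm_self, map_sum, LinearMap.sum_apply, Complex.re_sum]
    exact Finset.sum_comm
  have hcomm : ∀ j k,
      gaussianForm (applyDn (p k) (conjn (p j) * u j) - conjn (p j) * applyDn (p k) (u j)) (u k) =
        gaussianForm (conjn (p j) * u j) (conjn (p k) * u k) -
          gaussianForm (applyDn (p k) (u j)) (applyDn (p j) (u k)) := by
    intro j k
    rw [map_sub, LinearMap.sub_apply, gaussianForm_applyDn,
      gaussianForm_conjn_mul (p j) (applyDn (p k) (u j))]
  simp only [hD, hDstar, commutatorSum, hcomm, Complex.re_sum, Complex.sub_re,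
    Finset.sum_sub_distrib]
  ring

end GaussianForm

/-- Basic estimate from the commutator inequality (polynomial version):
if ‖u‖² ≤ C Σ_{j,k} ([p_k,p_j^*]u_j,u_k) for all polynomial (1,0)-forms u, then
‖u‖² ≤ C (‖Du‖² + ‖D^*u‖²) for all such forms. -/
theorem stmt18 (n : ℕ) (p : Fin n → MvPolynomial (Fin n) ℂ) (C : ℝ) (hC : 0 < C)
    (hyp : ∀ u : Fin n → MvPolynomial (Fin n) ℂ,
      (∑ j : Fin n, Nr (u j)) ≤
        C * (∑ j : Fin n, ∑ k : Fin n,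
          ∫ z : Fin n → ℂ,
            eval z (applyDn (p k) (conjn (p j) * u j) -
                conjn (p j) * applyDn (p k) (u j)) *
              (starRingEnd ℂ) (eval z (u k)) *
              ((Real.exp (-∑ i, ‖z i‖ ^ 2) : ℝ) : ℂ)).re)
    (u : Fin n → MvPolynomial (Fin n) ℂ) :
    (∑ j : Fin n, Nr (u j)) ≤
      C * ((∑ j : Fin n, ∑ k : Fin n,
          if j < k then Nr (applyDn (p j) (u k) - applyDn (p k) (u j)) else 0) +
        Nr (∑ j : Fin n, conjn (p j) * u j)) := by
  calc ∑ j, Nr (u j) ≤ C * commutatorSum p u := hyp u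
    _ ≤ C * (normSqD p u + normSqDstar p u) := by
      refine mul_le_mul_of_nonneg_left ?_ hC.le
      rw [normSqD_add_normSqDstar]
      exact le_add_of_nonneg_left <| Finset.sum_nonneg fun j _ =>
        Finset.sum_nonneg fun k _ => Nr_nonneg _
end
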